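/- arXiv:1504.05697 — 10 statements merged into one kernel-verified Lean document; each statement's English description precedes it below -/
import Mathlib

section
/- If φ : (0,∞) → ℝ satisfies inf_{x>0} (φ(x) - a·x) > -∞ for some real a, and φ** denotes its biconjugate (the supremum of all affine functions x ↦ a·x + b with a,b real such that a·x + b ≤ φ(x) for all x > 0), then for any ψ : (0,∞) → ℝ which is convex and also affinely bounded below, inf_{x>0} (φ(x) - ψ(x)) = inf_{x>0} (φ**(x) - ψ(x)) (as elements of ℝ ∪ {-∞}). -/
open Filter Set Topology

/-- `φ` admits an affine minorant on `(0,∞)`. -/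
def AffBdd (φ : ℝ → ℝ) : Prop := ∃ a b : ℝ, ∀ x > 0, a * x + b ≤ φ x

/-- The biconjugate of `φ` on `(0,∞)`: the pointwise supremum of all affine
minorants of `φ` on `(0,∞)`, i.e. the largest convex minorant of `φ`. -/
noncomputable def biconj (φ : ℝ → ℝ) (x : ℝ) : ℝ :=
  sSup {y : ℝ | ∃ a b : ℝ, (∀ t > 0, a * t + b ≤ φ t) ∧ y = a * x + b}

lemma support_line (ψ : ℝ → ℝ) (hconv : ConvexOn ℝ (Set.Ioi (0:ℝ)) ψ)
    {x : ℝ} (hx : 0 < x) :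
    ∃ a b : ℝ, (∀ t > 0, a * t + b ≤ ψ t) ∧ a * x + b = ψ x := by
  set S := (fun t => (ψ x - ψ t) / (x - t)) '' Set.Ioo 0 x with hS
  have key : ∀ t ∈ Set.Ioo 0 x, ∀ u, x < u →
      (ψ x - ψ t) / (x - t) ≤ (ψ u - ψ x) / (u - x) := by
    intro t ht u hu
    exact hconv.slope_mono_adjacent ht.1 (Set.mem_Ioi.mpr (hx.trans hu)) ht.2 hu
  have hne : S.Nonempty := ⟨_, ⟨x/2, ⟨by positivity, by linarith⟩, rfl⟩⟩
  have hbdd : BddAbove S := by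
    refine ⟨(ψ (x+1) - ψ x) / (x + 1 - x), ?_⟩
    rintro y ⟨t, ht, rfl⟩
    exact key t ht (x+1) (by linarith)
  set a := sSup S with ha
  refine ⟨a, ψ x - a * x, ?_, by ring⟩
  intro t ht
  rcases lt_trichotomy t x with h | h | h
  · have h1 : (ψ x - ψ t) / (x - t) ≤ a := le_csSup hbdd ⟨t, ⟨ht, h⟩, rfl⟩
    rw [div_le_iff₀ (by linarith)] at h1
    nlinarith
  · subst h; linarith
  · have h1 : a ≤ (ψ t - ψ x) / (t - x) := by
      apply csSup_le hne
      rintro y ⟨u, hu, rfl⟩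
      exact key u hu t h
    rw [le_div_iff₀ (by linarith)] at h1
    nlinarith

lemma biconj_le (φ : ℝ → ℝ) (hφ : AffBdd φ) {x : ℝ} (hx : 0 < x) :
    biconj φ x ≤ φ x := by
  obtain ⟨a, b, hab⟩ := hφ
  refine csSup_le ⟨a * x + b, a, b, hab, rfl⟩ ?_
  rintro y ⟨a', b', h, rfl⟩
  exact h x hx

theorem stmt_0 (φ ψ : ℝ → ℝ) (hφ : AffBdd φ) (hψ : AffBdd ψ)
    (hconv : ConvexOn ℝ (Set.Ioi (0:ℝ)) ψ) :
    (⨅ x : Set.Ioi (0:ℝ), ((φ x - ψ x : ℝ) : EReal)) =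
      ⨅ x : Set.Ioi (0:ℝ), ((biconj φ x - ψ x : ℝ) : EReal) := by
  apply le_antisymm
  · -- hard direction
    set M := ⨅ x : Set.Ioi (0:ℝ), ((φ x - ψ x : ℝ) : EReal) with hM
    by_cases hbot : M = ⊥
    · rw [hbot]; exact bot_le
    have htop : M ≠ ⊤ := by
      have h1 : M ≤ ((φ 1 - ψ 1 : ℝ) : EReal) :=
        iInf_le (fun x : Set.Ioi (0:ℝ) => ((φ x - ψ x : ℝ) : EReal))
          ⟨1, by norm_num⟩
      exact ne_top_of_le_ne_top (EReal.coe_ne_top _) h1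
    set m := M.toReal with hm'
    have hm : (m : EReal) = M := EReal.coe_toReal htop hbot
    have hlow : ∀ t > 0, m ≤ φ t - ψ t := by
      intro t ht
      have h1 : M ≤ ((φ t - ψ t : ℝ) : EReal) :=
        iInf_le (fun x : Set.Ioi (0:ℝ) => ((φ x - ψ x : ℝ) : EReal)) ⟨t, ht⟩
      rw [← hm] at h1
      exact_mod_cast h1
    apply le_iInf
    rintro ⟨x, hx⟩
    have hx' : (0:ℝ) < x := hx
    obtain ⟨a, b, hab, heq⟩ := support_line ψ hconv hx'
    have hbddx : BddAbove {y : ℝ | ∃ a b : ℝ,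
        (∀ t > 0, a * t + b ≤ φ t) ∧ y = a * x + b} := by
      refine ⟨φ x, ?_⟩
      rintro y ⟨a', b', h, rfl⟩
      exact h x hx'
    have hmem : a * x + (b + m) ≤ biconj φ x := by
      refine le_csSup hbddx ⟨a, b + m, ?_, rfl⟩
      intro t ht
      have h1 := hab t ht
      have h2 := hlow t ht
      linarith
    have hfin : m ≤ biconj φ x - ψ x := by linarith
    calc M = (m : EReal) := hm.symm
      _ ≤ ((biconj φ x - ψ x : ℝ) : EReal) := by exact_mod_cast hfin
  · refine iInf_mono fun x => ?_
    have hx : (0:ℝ) < (x : ℝ) := x.2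
    have := biconj_le φ hφ hx
    exact EReal.coe_le_coe_iff.mpr (by linarith)
end

section
/- If φ, ψ : (0,∞) → ℝ are both affinely bounded below, ψ is convex on (0,∞), and (φ(x) - ψ(x)) → +∞ as x → 0⁺, then (φ**(x) - ψ(x)) → +∞ as x → 0⁺, where φ** is the largest convex minorant of φ. -/
open Filter Set Topology

lemma exists_subgradient {ψ : ℝ → ℝ} (hconv : ConvexOn ℝ (Set.Ioi (0:ℝ)) ψ)
    {u : ℝ} (hu : 0 < u) : ∃ s : ℝ, ∀ t > 0, ψ u + s * (t - u) ≤ ψ t := by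
  set S : Set ℝ := (fun t => (ψ t - ψ u) / (t - u)) '' Set.Ioi u with hS
  have hne : S.Nonempty := ⟨_, ⟨u + 1, by simp, rfl⟩⟩
  have hu2 : (u / 2 : ℝ) ∈ Set.Ioi (0:ℝ) := by simp; linarith
  have hlb : (ψ u - ψ (u/2)) / (u - u/2) ∈ lowerBounds S := by
    rintro _ ⟨t, ht, rfl⟩
    exact hconv.slope_mono_adjacent hu2 (Set.mem_Ioi.2 (hu.trans ht)) (by linarith) ht
  have hbdd : BddBelow S := ⟨_, hlb⟩
  refine ⟨sInf S, fun t ht => ?_⟩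
  rcases lt_trichotomy t u with h | h | h
  · have hlb2 : (ψ u - ψ t) / (u - t) ∈ lowerBounds S := by
      rintro _ ⟨t', ht', rfl⟩
      exact hconv.slope_mono_adjacent (Set.mem_Ioi.2 ht) (Set.mem_Ioi.2 (hu.trans ht')) h ht'
    have h1 : (ψ u - ψ t) / (u - t) ≤ sInf S := le_csInf hne hlb2
    have h2 : ψ u - ψ t ≤ sInf S * (u - t) := by
      rw [div_le_iff₀ (by linarith)] at h1; linarith
    nlinarith
  · subst h; simp
  · have h1 : sInf S ≤ (ψ t - ψ u) / (t - u) := csInf_le hbdd ⟨t, Set.mem_Ioi.2 h, rfl⟩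
    rw [le_div_iff₀ (by linarith)] at h1
    linarith

set_option maxHeartbeats 1000000 in
theorem stmt_1 (φ ψ : ℝ → ℝ) (hφ : AffBdd φ) (hψ : AffBdd ψ)
    (hconv : ConvexOn ℝ (Set.Ioi (0:ℝ)) ψ)
    (hlim : Tendsto (fun x => φ x - ψ x) (𝓝[>] (0:ℝ)) atTop) :
    Tendsto (fun x => biconj φ x - ψ x) (𝓝[>] (0:ℝ)) atTop := by
  obtain ⟨aφ, bφ, haφ⟩ := hφ
  obtain ⟨aψ, bψ, haψ⟩ := hψ
  rw [tendsto_atTop]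
  intro c
  have h1 : {x : ℝ | c + 1 ≤ φ x - ψ x} ∈ 𝓝[>] (0:ℝ) :=
    hlim.eventually (eventually_ge_atTop (c + 1))
  rw [mem_nhdsGT_iff_exists_Ioo_subset] at h1
  obtain ⟨δ, hδ0, hδ⟩ := h1
  rw [Set.mem_Ioi] at hδ0
  set t₀ : ℝ := δ / 2 with ht₀
  have ht₀0 : 0 < t₀ := by positivity
  set K₁ : ℝ := max (ψ t₀ - bψ + |aψ| * t₀) 0 * (2 / t₀) with hK₁
  have hK₁0 : 0 ≤ K₁ := by positivity
  set K₂ : ℝ := max (ψ t₀ + K₁ * t₀ + c - aφ * δ - bφ) 0 / t₀ with hK₂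
  have hK₂0 : 0 ≤ K₂ := by positivity
  set K₃ : ℝ := max 0 (max (K₁ - aφ) K₂) with hK₃
  have hK₃0 : 0 ≤ K₃ := le_max_left _ _
  set ε : ℝ := min (t₀ / 2) (1 / (K₃ + 1)) with hε
  have hε0 : 0 < ε := by
    apply lt_min (by positivity); positivity
  have hεt₀ : ε ≤ t₀ / 2 := min_le_left _ _
  have hεK₃ : ε ≤ 1 / (K₃ + 1) := min_le_right _ _
  have hK₁aK₃ : K₁ - aφ ≤ K₃ := (le_max_left _ _).trans (le_max_right _ _)
  have hK₂K₃ : K₂ ≤ K₃ := (le_max_right _ _).trans (le_max_right _ _)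
  clear_value ε K₃ K₂ K₁ t₀
  filter_upwards [Ioo_mem_nhdsGT_of_mem (Set.mem_Ico.2 ⟨le_refl (0:ℝ), hε0⟩)] with x hx
  obtain ⟨hx0, hxε⟩ := hx
  have hxt₀ : x ≤ t₀ / 2 := by linarith
  have hxK₃ : x ≤ 1 / (K₃ + 1) := by linarith
  have hxδ : x < δ := by linarith
  obtain ⟨s, hs⟩ := exists_subgradient hconv hx0
  -- bound on s
  have hst₀ : ψ x + s * (t₀ - x) ≤ ψ t₀ := hs t₀ ht₀0
  have hψx : aψ * x + bψ ≤ ψ x := haψ x hx0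
  have hsN : s * (t₀ - x) ≤ max (ψ t₀ - bψ + |aψ| * t₀) 0 := by
    have h2 : -(aψ * x) ≤ |aψ| * t₀ := by
      have h1 : -(aψ * x) ≤ |aψ * x| := neg_le_abs _
      have h3 : |aψ * x| = |aψ| * x := by rw [abs_mul, abs_of_pos hx0]
      have h4 : |aψ| * x ≤ |aψ| * t₀ :=
        mul_le_mul_of_nonneg_left (by linarith) (abs_nonneg _)
      linarith only [h1, h3, h4]
    have : s * (t₀ - x) ≤ ψ t₀ - bψ + |aψ| * t₀ := by linarith
    exact this.trans (le_max_left _ _)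
  have hsK₁ : s ≤ K₁ := by
    rcases le_or_gt s 0 with h | h
    · linarith
    · have h2 : s * (t₀ / 2) ≤ s * (t₀ - x) :=
        mul_le_mul_of_nonneg_left (by linarith) h.le
      have h3 : s * (t₀ / 2) ≤ max (ψ t₀ - bψ + |aψ| * t₀) 0 := h2.trans hsN
      have hKt : K₁ * t₀ = max (ψ t₀ - bψ + |aψ| * t₀) 0 * 2 := by
        rw [hK₁]; field_simp
      have h5 : s * t₀ ≤ K₁ * t₀ := by
        have e : s * t₀ = 2 * (s * (t₀ / 2)) := by ring
        linarith only [h3, hKt, e]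
      exact le_of_mul_le_mul_right h5 ht₀0
  set μ : ℝ := (aφ * δ + bφ - ψ x - c) / (δ - x) with hμ
  set m : ℝ := min s (min aφ μ) with hm
  have hms : m ≤ s := min_le_left _ _
  have hma : m ≤ aφ := (min_le_right _ _).trans (min_le_left _ _)
  have hmμ : m ≤ μ := (min_le_right _ _).trans (min_le_right _ _)
  clear_value m
  have hδx : t₀ ≤ δ - x := by linarith
  have hδx0 : (0:ℝ) < δ - x := by linarith
  have hmμ' : m * (δ - x) ≤ aφ * δ + bφ - ψ x - c := by
    have := hmμ
    rw [hμ, le_div_iff₀ hδx0] at this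
    linarith
  -- bound s - m ≤ K₃
  have hsμK₂ : s - μ ≤ K₂ := by
    have hnum : s * (δ - x) - (aφ * δ + bφ - ψ x - c) ≤ max (ψ t₀ + K₁ * t₀ + c - aφ * δ - bφ) 0 := by
      have h2 : s * (δ - x) - (aφ * δ + bφ - ψ x - c)
          ≤ s * t₀ + ψ t₀ + c - aφ * δ - bφ := by
        have hd : δ = 2 * t₀ := by rw [ht₀]; ring
        have e : s * (δ - x) = s * (t₀ - x) + s * t₀ := by rw [hd]; ring
        linarith only [hst₀, e]
      have h3 : s * t₀ ≤ K₁ * t₀ := mul_le_mul_of_nonneg_right hsK₁ ht₀0.le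
      have : s * (δ - x) - (aφ * δ + bφ - ψ x - c) ≤ ψ t₀ + K₁ * t₀ + c - aφ * δ - bφ := by
        linarith
      exact this.trans (le_max_left _ _)
    have h4 : s - μ = (s * (δ - x) - (aφ * δ + bφ - ψ x - c)) / (δ - x) := by
      rw [hμ]; field_simp
    rw [h4, hK₂]
    exact div_le_div₀ (le_max_right _ _) hnum ht₀0 hδx
  have hsmK₃ : s - m ≤ K₃ := by
    have hmin : m = s ∨ m = aφ ∨ m = μ := by
      rw [hm]
      rcases min_cases s (min aφ μ) with ⟨h3, _⟩ | ⟨h3, _⟩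
      · left; exact h3
      · rcases min_cases aφ μ with ⟨h4, _⟩ | ⟨h4, _⟩
        · right; left; rw [h3, h4]
        · right; right; rw [h3, h4]
    rcases hmin with h3 | h3 | h3 <;> rw [h3] <;> linarith
  -- the affine minorant of φ
  have hminor : ∀ t > 0, m * t + (ψ x + c - m * x) ≤ φ t := by
    intro t ht
    rcases lt_or_ge t δ with htδ | htδ
    · have hφt : c + 1 ≤ φ t - ψ t := hδ ⟨ht, htδ⟩
      rcases le_or_gt x t with hxt | hxt
      · -- x ≤ t < δ
        have h2 : ψ x + s * (t - x) ≤ ψ t := hs t ht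
        have h3 : m * (t - x) ≤ s * (t - x) :=
          mul_le_mul_of_nonneg_right hms (by linarith)
        have e1 : m * (t - x) = m * t - m * x := by ring
        have e2 : s * (t - x) = s * t - s * x := by ring
        linarith only [h2, h3, hφt, e1, e2]
      · -- 0 < t < x
        have h2 : ψ x + s * (t - x) ≤ ψ t := hs t ht
        have h4 : (s - m) * (x - t) ≤ (s - m) * x :=
          mul_le_mul_of_nonneg_left (by linarith) (by linarith)
        have h5 : (s - m) * x ≤ K₃ * x := mul_le_mul_of_nonneg_right hsmK₃ hx0.le
        have h6 : K₃ * x ≤ 1 := by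
          have h7 : (K₃ + 1) * x ≤ 1 := by
            rw [← le_div_iff₀' (by linarith : (0:ℝ) < K₃ + 1)]
            exact hxK₃
          have e : (K₃ + 1) * x = K₃ * x + x := by ring
          linarith only [h7, e, hx0]
        have e1 : (s - m) * (x - t) = s * x - s * t - m * x + m * t := by ring
        have e2 : s * (t - x) = s * t - s * x := by ring
        linarith only [h2, h4, h5, h6, hφt, e1, e2]
    · -- δ ≤ t : use the global affine bound on φ
      have h2 : aφ * t + bφ ≤ φ t := haφ t (by linarith)
      have h3 : (m - aφ) * (t - δ) ≤ 0 :=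
        mul_nonpos_of_nonpos_of_nonneg (by linarith) (by linarith)
      have e1 : (m - aφ) * (t - δ) = m * t - m * δ - aφ * t + aφ * δ := by ring
      have e2 : m * (δ - x) = m * δ - m * x := by ring
      linarith only [h2, h3, hmμ', e1, e2]
  -- conclude
  have hmem : ψ x + c ∈ {y : ℝ | ∃ a b : ℝ, (∀ t > 0, a * t + b ≤ φ t) ∧ y = a * x + b} :=
    ⟨m, ψ x + c - m * x, hminor, by ring⟩
  have hbdd : BddAbove {y : ℝ | ∃ a b : ℝ, (∀ t > 0, a * t + b ≤ φ t) ∧ y = a * x + b} := by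
    refine ⟨φ x, ?_⟩
    rintro y ⟨a, b, hab, rfl⟩
    exact hab x hx0
  have : ψ x + c ≤ biconj φ x := le_csSup hbdd hmem
  simp only [ge_iff_le]
  linarith
end

section
/- Let φ, ψ : (0,∞) → ℝ be affinely bounded below, with ψ convex, and suppose ψ is not in class Φ₃, i.e. either liminf_{x→∞} ψ(x)/x = +∞, or liminf_{x→∞} ψ(x)/x = â < ∞ and liminf_{x→∞}(ψ(x) - â·x) = -∞. If (φ(x) - ψ(x)) → +∞ as x → +∞, then (φ**(x) - ψ(x)) → +∞ as x → +∞, where φ** is the largest convex minorant of φ. -/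
open Filter Set Topology

/-- Infimum of slopes of chords of `ψ` to the right of `x`: a subgradient. -/
noncomputable def rS (ψ : ℝ → ℝ) (x : ℝ) : ℝ :=
  sInf {s : ℝ | ∃ u, x < u ∧ s = (ψ u - ψ x) / (u - x)}

section aux
variable {ψ : ℝ → ℝ}

lemma three_pt (hconv : ConvexOn ℝ (Set.Ioi (0:ℝ)) ψ) {t x u : ℝ} (ht : 0 < t)
    (htx : t < x) (hxu : x < u) :
    (ψ x - ψ t) / (x - t) ≤ (ψ u - ψ x) / (u - x) :=
  hconv.slope_mono_adjacent (Set.mem_Ioi.2 ht) (Set.mem_Ioi.2 (by linarith)) htx hxu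

lemma bddBelow_rSset (hconv : ConvexOn ℝ (Set.Ioi (0:ℝ)) ψ) {x : ℝ} (hx : 0 < x) :
    BddBelow {s : ℝ | ∃ u, x < u ∧ s = (ψ u - ψ x) / (u - x)} := by
  refine ⟨(ψ x - ψ (x/2)) / (x - x/2), ?_⟩
  rintro s ⟨u, hu, rfl⟩
  exact three_pt hconv (by linarith) (by linarith) hu

lemma rS_le (hconv : ConvexOn ℝ (Set.Ioi (0:ℝ)) ψ) {x u : ℝ} (hx : 0 < x) (hu : x < u) :
    rS ψ x ≤ (ψ u - ψ x) / (u - x) :=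
  csInf_le (bddBelow_rSset hconv hx) ⟨u, hu, rfl⟩

lemma le_rS (hconv : ConvexOn ℝ (Set.Ioi (0:ℝ)) ψ) {t x : ℝ} (ht : 0 < t) (htx : t < x) :
    (ψ x - ψ t) / (x - t) ≤ rS ψ x := by
  refine le_csInf ⟨_, x + 1, lt_add_one x, rfl⟩ ?_
  rintro s ⟨u, hu, rfl⟩
  exact three_pt hconv ht htx hu

/-- `rS ψ x` is a subgradient of `ψ` at `x` on `(0,∞)`. -/
lemma subgrad (hconv : ConvexOn ℝ (Set.Ioi (0:ℝ)) ψ) {x t : ℝ} (hx : 0 < x) (ht : 0 < t) :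
    ψ x + rS ψ x * (t - x) ≤ ψ t := by
  rcases lt_trichotomy t x with h | rfl | h
  · have h1 := le_rS hconv ht h
    rw [div_le_iff₀ (by linarith)] at h1
    nlinarith [h1]
  · simp
  · have h1 := rS_le hconv hx h
    rw [le_div_iff₀ (by linarith)] at h1
    nlinarith [h1]

lemma case1_slope (hconv : ConvexOn ℝ (Set.Ioi (0:ℝ)) ψ)
    (h : Filter.liminf (fun x => ((ψ x / x : ℝ) : EReal)) atTop = ⊤) (C : ℝ) :
    ∃ X : ℝ, 2 ≤ X ∧ ∀ x, X ≤ x → C ≤ rS ψ x := by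
  set C₁ : ℝ := |C| + |ψ 1| + 1 with hC₁
  have h2 : ∀ᶠ x : ℝ in atTop, (C₁ : EReal) < ((ψ x / x : ℝ) : EReal) :=
    eventually_lt_of_lt_liminf (by rw [h]; exact EReal.coe_lt_top C₁)
  obtain ⟨X0, hX0⟩ := eventually_atTop.1 h2
  refine ⟨max X0 2, le_max_right _ _, fun x hx => ?_⟩
  have hx2 : (2:ℝ) ≤ x := le_trans (le_max_right _ _) hx
  have hd : C₁ < ψ x / x := by exact_mod_cast hX0 x (le_trans (le_max_left _ _) hx)
  have hxpos : (0:ℝ) < x := by linarith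
  have hψx : C₁ * x < ψ x := (lt_div_iff₀ hxpos).1 hd
  have hs : C ≤ (ψ x - ψ 1) / (x - 1) := by
    rw [le_div_iff₀ (by linarith)]
    nlinarith [le_abs_self C, neg_abs_le C, le_abs_self (ψ 1), abs_nonneg C, abs_nonneg (ψ 1)]
  exact hs.trans (le_rS hconv one_pos (by linarith))

lemma case2_chord (hconv : ConvexOn ℝ (Set.Ioi (0:ℝ)) ψ) {a' : ℝ}
    (h1 : Filter.liminf (fun x => ((ψ x / x : ℝ) : EReal)) atTop = (a' : EReal)) :
    ∀ x u : ℝ, 0 < x → x < u → (ψ u - ψ x) / (u - x) ≤ a' := by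
  intro x u hx hxu
  by_contra hcon
  push_neg at hcon
  set c := (ψ u - ψ x) / (u - x) with hc
  have hcdef : c * (u - x) = ψ u - ψ x :=
    div_mul_cancel₀ _ (by linarith : u - x ≠ 0)
  have key : ∀ v, u < v → ψ x + c * (v - x) ≤ ψ v := by
    intro v hv
    have h3 := three_pt hconv hx hxu hv
    rw [le_div_iff₀ (by linarith)] at h3
    nlinarith [h3]
  set c' := (a' + c) / 2 with hc'
  have hac : a' < c' := by rw [hc']; linarith
  have hcc : c' < c := by rw [hc']; linarith
  have hev : ∀ᶠ v : ℝ in atTop, (c' : EReal) ≤ ((ψ v / v : ℝ) : EReal) := by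
    have hevr : ∀ᶠ v : ℝ in atTop, c' ≤ ψ v / v := by
      filter_upwards [eventually_ge_atTop (max (u + 1) ((c * x - ψ x) / (c - c')))] with v hv
      have hv1 : u + 1 ≤ v := le_trans (le_max_left _ _) hv
      have hv2 : (c * x - ψ x) / (c - c') ≤ v := le_trans (le_max_right _ _) hv
      have hvpos : 0 < v := by linarith
      rw [div_le_iff₀ (by linarith : (0:ℝ) < c - c')] at hv2
      have hk := key v (by linarith)
      rw [le_div_iff₀ hvpos]
      nlinarith
    exact hevr.mono fun v hv => EReal.coe_le_coe_iff.2 hv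
  have hle : (c' : EReal) ≤ Filter.liminf (fun x => ((ψ x / x : ℝ) : EReal)) atTop :=
    le_liminf_of_le (by isBoundedDefault) hev
  rw [h1] at hle
  exact absurd (EReal.coe_le_coe_iff.1 hle) (not_le.2 hac)

lemma case2_slope (hconv : ConvexOn ℝ (Set.Ioi (0:ℝ)) ψ) {a' : ℝ}
    (h1 : Filter.liminf (fun x => ((ψ x / x : ℝ) : EReal)) atTop = (a' : EReal))
    {ε : ℝ} (hε : 0 < ε) :
    ∃ X : ℝ, 2 ≤ X ∧ ∀ x, X ≤ x → a' - ε ≤ rS ψ x := by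
  by_contra hcon
  push_neg at hcon
  have hfreq : ∃ᶠ v : ℝ in atTop,
      ((ψ v / v : ℝ) : EReal) ≤ ((a' - ε / 2 : ℝ) : EReal) := by
    rw [frequently_atTop]
    intro b
    obtain ⟨x, hxb, hxs⟩ := hcon (max b (max 2 (2 * (ψ 1 - a' + ε) / ε))) (le_trans (le_max_left _ _) (le_max_right _ _))
    have hxb' : b ≤ x := le_trans (le_max_left _ _) hxb
    have hx2 : (2:ℝ) ≤ x := le_trans (le_trans (le_max_left _ _) (le_max_right _ _)) hxb
    have hxV : 2 * (ψ 1 - a' + ε) / ε ≤ x :=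
      le_trans (le_trans (le_max_right _ _) (le_max_right _ _)) hxb
    refine ⟨x, hxb', ?_⟩
    have hsl := le_rS hconv one_pos (by linarith : (1:ℝ) < x)
    have hlt : (ψ x - ψ 1) / (x - 1) < a' - ε := lt_of_le_of_lt hsl hxs
    rw [div_lt_iff₀ (by linarith : (0:ℝ) < x - 1)] at hlt
    have hxV' : 2 * (ψ 1 - a' + ε) ≤ ε * x := by
      rw [div_le_iff₀ hε] at hxV; linarith
    have hxpos : (0:ℝ) < x := by linarith
    have : ψ x / x ≤ a' - ε / 2 := by
      rw [div_le_iff₀ hxpos]; nlinarith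
    exact EReal.coe_le_coe_iff.2 this
  have hle := liminf_le_of_frequently_le hfreq (by isBoundedDefault)
  rw [h1] at hle
  have := EReal.coe_le_coe_iff.1 hle
  linarith

lemma case2_drop {a' : ℝ}
    (h2 : Filter.liminf (fun x => ((ψ x - a' * x : ℝ) : EReal)) atTop = ⊥) (C X : ℝ) :
    ∃ t, X ≤ t ∧ ψ t - a' * t ≤ C := by
  have hfr : ∃ᶠ x : ℝ in atTop, ((ψ x - a' * x : ℝ) : EReal) < ((C : ℝ) : EReal) := by
    by_contra h
    simp only [Filter.not_frequently, not_lt] at h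
    have hle : ((C : ℝ) : EReal) ≤ Filter.liminf (fun x => ((ψ x - a' * x : ℝ) : EReal)) atTop :=
      le_liminf_of_le (by isBoundedDefault) h
    rw [h2] at hle
    exact absurd hle (EReal.bot_lt_coe C).not_ge
  obtain ⟨t, htX, ht⟩ := (frequently_atTop.1 hfr) X
  exact ⟨t, htX, le_of_lt (EReal.coe_lt_coe_iff.1 ht)⟩

end aux

theorem stmt_2 (φ ψ : ℝ → ℝ) (hφ : AffBdd φ) (hψ : AffBdd ψ)
    (hconv : ConvexOn ℝ (Set.Ioi (0:ℝ)) ψ)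
    (hnot3 : Filter.liminf (fun x => ((ψ x / x : ℝ) : EReal)) atTop = ⊤ ∨
      ∃ a : ℝ, Filter.liminf (fun x => ((ψ x / x : ℝ) : EReal)) atTop = (a : EReal) ∧
        Filter.liminf (fun x => ((ψ x - a * x : ℝ) : EReal)) atTop = ⊥)
    (hlim : Tendsto (fun x => φ x - ψ x) atTop atTop) :
    Tendsto (fun x => biconj φ x - ψ x) atTop atTop := by
  obtain ⟨p, q, hpq⟩ := hφ
  rw [tendsto_atTop]
  intro M
  obtain ⟨T₀, hT₀⟩ := eventually_atTop.1 (tendsto_atTop.1 hlim M)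
  set T := max T₀ 1 with hTdef
  have hT1 : (1:ℝ) ≤ T := le_max_right _ _
  have hT0 : (0:ℝ) < T := by linarith
  have hφψ : ∀ u, T ≤ u → ψ u + M ≤ φ u := by
    intro u hu
    have := hT₀ u (le_trans (le_max_left _ _) hu)
    linarith
  have key : ∃ X : ℝ, 3 * T + 1 ≤ X ∧ ∀ x, X ≤ x →
      ψ x - rS ψ x * x + M - q ≤ 0 ∧
      ψ x - rS ψ x * x + (rS ψ x - p) * T + M - q ≤ 0 := by
    rcases hnot3 with h | ⟨a', h1, h2⟩
    · -- slopes of ψ tend to +∞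
      obtain ⟨X₁, _, hX₁⟩ := case1_slope hconv h
        (max ((ψ (3 * T) + M - q) / (3 * T)) ((ψ (3 * T) - p * T + M - q) / (2 * T)))
      refine ⟨max X₁ (3 * T + 1), le_max_right _ _, fun x hx => ?_⟩
      have hx1 : X₁ ≤ x := le_trans (le_max_left _ _) hx
      have hx3T : 3 * T + 1 ≤ x := le_trans (le_max_right _ _) hx
      have hx0 : 0 < x := by linarith
      set s := rS ψ x with hs
      have hsC := hX₁ x hx1
      have hC1 : ψ (3 * T) + M - q ≤ s * (3 * T) := by
        have := le_trans (le_max_left _ _) hsC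
        rw [div_le_iff₀ (by linarith : (0:ℝ) < 3 * T)] at this
        nlinarith
      have hC2 : ψ (3 * T) - p * T + M - q ≤ s * (2 * T) := by
        have := le_trans (le_max_right _ _) hsC
        rw [div_le_iff₀ (by linarith : (0:ℝ) < 2 * T)] at this
        nlinarith
      have hI : ψ x - s * x ≤ ψ (3 * T) - s * (3 * T) := by
        have h := subgrad hconv hx0 (by linarith : (0:ℝ) < 3 * T)
        rw [← hs] at h
        nlinarith [h]
      constructor
      · nlinarith [hI, hC1]
      · nlinarith [hI, hC2]
    · -- finite asymptotic slope a', with ψ x - a' x → -∞ along a subsequence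
      have hchord := case2_chord hconv h1
      set C := min (q - M) (q - M - (a' - p) * T) with hC
      obtain ⟨t₀, ht₀1, ht₀⟩ := case2_drop h2 (C - 1) 1
      have ht₀pos : (0:ℝ) < t₀ := by linarith
      obtain ⟨X₂, _, hX₂⟩ := case2_slope hconv h1 (one_div_pos.2 ht₀pos)
      refine ⟨max (max X₂ (t₀ + 1)) (3 * T + 1), le_max_right _ _, fun x hx => ?_⟩
      have hxX₂ : X₂ ≤ x := le_trans (le_trans (le_max_left _ _) (le_max_left _ _)) hx
      have hxt₀ : t₀ + 1 ≤ x := le_trans (le_trans (le_max_right _ _) (le_max_left _ _)) hx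
      have hx3T : 3 * T + 1 ≤ x := le_trans (le_max_right _ _) hx
      have hx0 : (0:ℝ) < x := by linarith
      set s := rS ψ x with hs
      have hSa : s ≤ a' := by
        have h4 := rS_le hconv hx0 (lt_add_one x)
        have h5 := hchord x (x + 1) hx0 (lt_add_one x)
        rw [hs]
        exact le_trans h4 h5
      have hSl : a' - 1 / t₀ ≤ s := hX₂ x hxX₂
      have hI : ψ x - s * x ≤ ψ t₀ - s * t₀ := by
        have h := subgrad hconv hx0 ht₀pos
        rw [← hs] at h
        nlinarith [h]
      have hIC : ψ x - s * x ≤ C := by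
        have h6 : (a' - s) * t₀ ≤ (1 / t₀) * t₀ :=
          mul_le_mul_of_nonneg_right (by linarith) ht₀pos.le
        have h7 : (1 / t₀) * t₀ = 1 := by field_simp
        have h9 : (a' - s) * t₀ = a' * t₀ - s * t₀ := by ring
        linarith
      have hCmin1 : C ≤ q - M := min_le_left _ _
      have hCmin2 : C ≤ q - M - (a' - p) * T := min_le_right _ _
      constructor
      · linarith
      · have h8 : (s - p) * T ≤ (a' - p) * T :=
          mul_le_mul_of_nonneg_right (by linarith) hT0.le
        linarith
  obtain ⟨X, hX1, hX⟩ := key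
  refine eventually_atTop.2 ⟨X, fun x hx => ?_⟩
  have hx0 : 0 < x := by linarith
  obtain ⟨hc1, hc2⟩ := hX x hx
  set s := rS ψ x with hs
  have hmin : ∀ t > 0, s * t + (ψ x - s * x + M) ≤ φ t := by
    intro t ht
    rcases le_or_gt T t with hTt | hTt
    · have hsub := subgrad hconv hx0 ht
      rw [← hs] at hsub
      have hf := hφψ t hTt
      nlinarith [hsub]
    · have hpt := hpq t ht
      rcases le_or_gt s p with hsp | hsp
      · have h5 : (s - p) * t ≤ 0 :=
          mul_nonpos_of_nonpos_of_nonneg (by linarith) ht.le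
        nlinarith
      · have h5 : (s - p) * t ≤ (s - p) * T :=
          mul_le_mul_of_nonneg_left hTt.le (by linarith)
        nlinarith
  have hbdd : BddAbove {y : ℝ | ∃ a b : ℝ, (∀ t > 0, a * t + b ≤ φ t) ∧ y = a * x + b} := by
    refine ⟨φ x, ?_⟩
    rintro y ⟨a, b, hab, rfl⟩
    exact hab x hx0
  have hmem : ψ x + M ∈ {y : ℝ | ∃ a b : ℝ, (∀ t > 0, a * t + b ≤ φ t) ∧ y = a * x + b} :=
    ⟨s, ψ x - s * x + M, hmin, by ring⟩
  have hsup : ψ x + M ≤ biconj φ x := le_csSup hbdd hmem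
  linarith
end

section
/- For any φ : (0,∞) → ℝ admitting an affine minorant, liminf_{x→0⁺} φ(x) = lim_{x→0⁺} φ**(x), where φ** is the largest convex minorant of φ (limits taken in ℝ ∪ {±∞}). -/
open Filter Set Topology

/-- Set of intercepts of affine minorants. -/
def interS (φ : ℝ → ℝ) : Set ℝ := {b | ∃ a : ℝ, ∀ t > 0, a * t + b ≤ φ t}

lemma biconj_ge (φ : ℝ → ℝ) {x : ℝ} (hx : 0 < x) {a b : ℝ}
    (hab : ∀ t > 0, a * t + b ≤ φ t) : a * x + b ≤ biconj φ x := by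
  apply le_csSup
  · refine ⟨φ x, ?_⟩
    rintro y ⟨a', b', h', rfl⟩
    exact h' x hx
  · exact ⟨a, b, hab, rfl⟩

/-- For every `b` in `interS φ`, `b ≤ liminf φ` at `0⁺`. -/
lemma le_liminf_of_mem (φ : ℝ → ℝ) {b : ℝ} (hb : b ∈ interS φ) :
    (b : EReal) ≤ Filter.liminf (fun x => ((φ x : ℝ) : EReal)) (𝓝[>] (0:ℝ)) := by
  obtain ⟨a, hab⟩ := hb
  have h1 : Tendsto (fun x : ℝ => ((a * x + b : ℝ) : EReal)) (𝓝[>] (0:ℝ)) (𝓝 (b : EReal)) := by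
    rw [EReal.tendsto_coe]
    have : Tendsto (fun x : ℝ => a * x + b) (𝓝 (0:ℝ)) (𝓝 (a * 0 + b)) := by
      exact ((continuous_const.mul continuous_id).add continuous_const).tendsto 0
    simpa using this.mono_left nhdsWithin_le_nhds
  have h2 : Filter.liminf (fun x : ℝ => ((a * x + b : ℝ) : EReal)) (𝓝[>] (0:ℝ)) = (b : EReal) :=
    h1.liminf_eq
  rw [← h2]
  refine Filter.liminf_le_liminf ?_ ?_ ?_
  · filter_upwards [self_mem_nhdsWithin] with x hx
    exact EReal.coe_le_coe_iff.2 (hab x hx)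
  · isBoundedDefault
  · isBoundedDefault

/-- Key construction: if `φ > c` on `(0, δ)` and `φ` has an affine minorant,
then `c` is an achievable intercept. -/
lemma mem_interS_of_lt (φ : ℝ → ℝ) {a₀ b₀ : ℝ} (h₀ : ∀ t > 0, a₀ * t + b₀ ≤ φ t)
    {c δ : ℝ} (hδ : 0 < δ) (hc : ∀ x ∈ Ioo (0:ℝ) δ, c < φ x) : c ∈ interS φ := by
  refine ⟨min 0 (min a₀ (a₀ + (b₀ - c) / δ)), fun t ht => ?_⟩
  set a := min 0 (min a₀ (a₀ + (b₀ - c) / δ)) with ha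
  have ha0 : a ≤ 0 := min_le_left _ _
  have haa₀ : a ≤ a₀ := le_trans (min_le_right _ _) (min_le_left _ _)
  have haq : a ≤ a₀ + (b₀ - c) / δ := le_trans (min_le_right _ _) (min_le_right _ _)
  rcases lt_or_ge t δ with htδ | htδ
  · have : c < φ t := hc t ⟨ht, htδ⟩
    nlinarith [mul_nonpos_of_nonpos_of_nonneg ha0 ht.le]
  · have h1 : a₀ * t + b₀ ≤ φ t := h₀ t ht
    have h2 : (a - a₀) * t ≤ (a - a₀) * δ :=
      mul_le_mul_of_nonpos_left htδ (by linarith)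
    have h3 : (a - a₀) * δ ≤ b₀ - c := by
      have : (a - a₀) ≤ (b₀ - c) / δ := by linarith
      calc (a - a₀) * δ ≤ (b₀ - c) / δ * δ := mul_le_mul_of_nonneg_right this hδ.le
        _ = b₀ - c := by field_simp
    nlinarith

theorem stmt_3 (φ : ℝ → ℝ) (hφ : AffBdd φ) :
    ∃ L : EReal, Tendsto (fun x => ((biconj φ x : ℝ) : EReal)) (𝓝[>] (0:ℝ)) (𝓝 L) ∧
      Filter.liminf (fun x => ((φ x : ℝ) : EReal)) (𝓝[>] (0:ℝ)) = L := by
  obtain ⟨a₀, b₀, h₀⟩ := hφ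
  set lf := Filter.liminf (fun x => ((φ x : ℝ) : EReal)) (𝓝[>] (0:ℝ)) with hlf
  have hb₀ : b₀ ∈ interS φ := ⟨a₀, h₀⟩
  -- any real strictly below `lf` lies in `interS φ`
  have key : ∀ c : ℝ, (c : EReal) < lf → c ∈ interS φ := by
    intro c hc
    have hev : ∀ᶠ x in 𝓝[>] (0:ℝ), (c : EReal) < ((φ x : ℝ) : EReal) :=
      Filter.eventually_lt_of_lt_liminf hc
    rw [eventually_nhdsWithin_iff] at hev
    obtain ⟨u, hu, huc⟩ := Metric.eventually_nhds_iff.1 hev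
    refine mem_interS_of_lt φ h₀ hu (fun x hx => ?_)
    have : (c : EReal) < ((φ x : ℝ) : EReal) := by
      apply huc _ hx.1
      rw [Real.dist_eq, sub_zero, abs_of_pos hx.1]
      exact hx.2
    exact_mod_cast this
  by_cases hbdd : BddAbove (interS φ)
  · -- bounded case: the limit is the real supremum M
    set M : ℝ := sSup (interS φ) with hM
    have hSne : (interS φ).Nonempty := ⟨b₀, hb₀⟩
    refine ⟨(M : EReal), ?_, ?_⟩
    · -- tendsto of biconj to M
      rw [EReal.tendsto_coe]
      rw [tendsto_order]
      constructor
      · -- lower bound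
        intro c hc
        obtain ⟨b, hbS, hcb⟩ := exists_lt_of_lt_csSup hSne hc
        obtain ⟨a, hab⟩ := hbS
        have h1 : Tendsto (fun x : ℝ => a * x + b) (𝓝[>] (0:ℝ)) (𝓝 b) := by
          have : Tendsto (fun x : ℝ => a * x + b) (𝓝 (0:ℝ)) (𝓝 (a * 0 + b)) :=
            ((continuous_const.mul continuous_id).add continuous_const).tendsto 0
          simpa using this.mono_left nhdsWithin_le_nhds
        filter_upwards [h1.eventually_const_lt hcb, self_mem_nhdsWithin] with x hx hx0
        exact lt_of_lt_of_le hx (biconj_ge φ hx0 hab)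
      · -- upper bound
        intro c hc
        set K : ℝ := max (φ 1) M with hK
        have h1 : Tendsto (fun x : ℝ => x * K + (1 - x) * M) (𝓝[>] (0:ℝ)) (𝓝 M) := by
          have : Tendsto (fun x : ℝ => x * K + (1 - x) * M) (𝓝 (0:ℝ))
              (𝓝 ((0:ℝ) * K + (1 - 0) * M)) :=
            ((continuous_id.mul continuous_const).add
              ((continuous_const.sub continuous_id).mul continuous_const)).tendsto 0
          simpa using this.mono_left nhdsWithin_le_nhds
        have h2 : ∀ᶠ x in 𝓝[>] (0:ℝ), x < 1 := by
          filter_upwards [(nhdsWithin_le_nhds (Metric.ball_mem_nhds (0:ℝ) one_pos))] with x hx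
          have := abs_lt.1 (by simpa [Real.dist_eq] using hx)
          exact this.2
        filter_upwards [h1.eventually_lt_const hc, h2, self_mem_nhdsWithin] with x hx hx1 hx0
        refine lt_of_le_of_lt ?_ hx
        apply csSup_le
        · exact ⟨a₀ * x + b₀, a₀, b₀, h₀, rfl⟩
        · rintro y ⟨a, b, hab, rfl⟩
          have hbM : b ≤ M := le_csSup hbdd ⟨a, hab⟩
          have habK : a * 1 + b ≤ K := le_trans (hab 1 one_pos) (le_max_left _ _)
          have hx0' : (0:ℝ) < x := hx0
          nlinarith [mul_le_mul_of_nonneg_left habK hx0'.le,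
            mul_le_mul_of_nonneg_left hbM (by linarith : (0:ℝ) ≤ 1 - x)]
    · -- liminf = M
      apply le_antisymm
      · by_contra h
        push_neg at h
        obtain ⟨c, hMc, hclf⟩ := EReal.exists_between_coe_real h
        have : c ∈ interS φ := key c hclf
        exact absurd (le_csSup hbdd this) (not_le.2 (by exact_mod_cast hMc))
      · apply le_of_forall_lt
        intro c hc
        induction c with
        | bot =>
          exact lt_of_lt_of_le (EReal.bot_lt_coe b₀) (le_liminf_of_mem φ hb₀)
        | coe c =>
          have hcM : c < M := by exact_mod_cast hc
          obtain ⟨b, hbS, hcb⟩ := exists_lt_of_lt_csSup hSne hcM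
          exact lt_of_lt_of_le (by exact_mod_cast hcb) (le_liminf_of_mem φ hbS)
        | top => exact absurd hc (by simp)
  · -- unbounded case: limit is ⊤
    have hall : ∀ r : ℝ, ∃ b ∈ interS φ, r < b := by
      intro r
      by_contra h
      push_neg at h
      exact hbdd ⟨r, fun b hb => h b hb⟩
    have hlftop : lf = ⊤ := by
      rw [eq_top_iff]
      apply le_of_forall_lt
      intro c hc
      induction c with
      | bot =>
        exact lt_of_lt_of_le (EReal.bot_lt_coe b₀) (le_liminf_of_mem φ hb₀)
      | coe c =>
        obtain ⟨b, hbS, hcb⟩ := hall c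
        exact lt_of_lt_of_le (by exact_mod_cast hcb) (le_liminf_of_mem φ hbS)
      | top => exact absurd hc (lt_irrefl _)
    refine ⟨⊤, ?_, hlftop⟩
    rw [EReal.tendsto_nhds_top_iff_real]
    intro r
    obtain ⟨b, hbS, hrb⟩ := hall r
    obtain ⟨a, hab⟩ := hbS
    have h1 : Tendsto (fun x : ℝ => a * x + b) (𝓝[>] (0:ℝ)) (𝓝 b) := by
      have : Tendsto (fun x : ℝ => a * x + b) (𝓝 (0:ℝ)) (𝓝 (a * 0 + b)) :=
        ((continuous_const.mul continuous_id).add continuous_const).tendsto 0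
      simpa using this.mono_left nhdsWithin_le_nhds
    filter_upwards [h1.eventually_const_lt hrb, self_mem_nhdsWithin] with x hx hx0
    exact_mod_cast lt_of_lt_of_le hx (biconj_ge φ hx0 hab)
end

section
/- For any φ : (0,∞) → ℝ admitting an affine minorant, liminf_{x→+∞} φ(x)/x = lim_{x→+∞} φ**(x)/x, where φ** is the largest convex minorant of φ (values in ℝ ∪ {+∞}). -/
open Filter Set Topology

/-- If eventually `c * x < φ x`, then `c` is the slope of an affine minorant. -/
lemma slope_mem (φ : ℝ → ℝ) (hφ : AffBdd φ) (c : ℝ)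
    (h : ∀ᶠ x in atTop, c * x < φ x) : ∃ b, ∀ t > 0, c * t + b ≤ φ t := by
  obtain ⟨a0, b0, h0⟩ := hφ
  obtain ⟨T, hT⟩ := (eventually_atTop).1 h
  set M := max T 1 with hM
  refine ⟨min 0 (b0 - (max 0 (c - a0)) * M), fun t ht => ?_⟩
  rcases le_or_gt M t with h1 | h1
  · have h2 := hT t (le_trans (le_max_left _ _) h1)
    have h3 : min 0 (b0 - (max 0 (c - a0)) * M) ≤ 0 := min_le_left _ _
    linarith
  · have h2 := h0 t ht
    have h4 : min 0 (b0 - (max 0 (c - a0)) * M) ≤ b0 - (max 0 (c - a0)) * M :=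
      min_le_right _ _
    have h5 : (c - a0) * t ≤ max 0 (c - a0) * M := by
      rcases le_or_gt c a0 with h6 | h6
      · have : (c - a0) * t ≤ 0 := mul_nonpos_of_nonpos_of_nonneg (by linarith) ht.le
        have : 0 ≤ max 0 (c - a0) * M :=
          mul_nonneg (le_max_left _ _) (le_trans zero_le_one (le_max_right _ _))
        linarith
      · have h7 : max 0 (c - a0) = c - a0 := max_eq_right (by linarith)
        rw [h7]
        exact mul_le_mul_of_nonneg_left h1.le (by linarith)
    nlinarith

theorem stmt_4 (φ : ℝ → ℝ) (hφ : AffBdd φ) :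
    ∃ L : EReal, Tendsto (fun x => ((biconj φ x / x : ℝ) : EReal)) atTop (𝓝 L) ∧
      Filter.liminf (fun x => ((φ x / x : ℝ) : EReal)) atTop = L := by
  classical
  set S : Set ℝ := {a : ℝ | ∃ b, ∀ t > 0, a * t + b ≤ φ t} with hS
  have hSne : S.Nonempty := by obtain ⟨a, b, h⟩ := hφ; exact ⟨a, b, h⟩
  set L : EReal := Filter.liminf (fun x => ((φ x / x : ℝ) : EReal)) atTop with hL
  -- lower bound for biconj: for x > 0 and (a,b) minorant, a*x+b ≤ biconj φ x
  have hbLow : ∀ a b : ℝ, (∀ t > 0, a * t + b ≤ φ t) → ∀ x > 0, a * x + b ≤ biconj φ x := by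
    intro a b hab x hx
    apply le_csSup
    · refine ⟨φ x, ?_⟩
      rintro y ⟨a', b', hab', rfl⟩
      exact hab' x hx
    · exact ⟨a, b, hab, rfl⟩
  -- each slope is ≤ L
  have hslopeL : ∀ a ∈ S, (a : EReal) ≤ L := by
    rintro a ⟨b, hab⟩
    have h1 : Tendsto (fun x : ℝ => b / x) atTop (𝓝 0) :=
      tendsto_const_nhds.div_atTop tendsto_id
    have ht : Tendsto (fun x : ℝ => a + b / x) atTop (𝓝 (a + 0)) :=
      tendsto_const_nhds.add h1
    rw [add_zero] at ht
    have ht' : Tendsto (fun x : ℝ => ((a + b / x : ℝ) : EReal)) atTop (𝓝 (a : EReal)) :=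
      EReal.tendsto_coe.2 ht
    have heq : Filter.liminf (fun x : ℝ => ((a + b / x : ℝ) : EReal)) atTop = (a : EReal) :=
      ht'.liminf_eq
    rw [← heq, hL]
    apply liminf_le_liminf
    · filter_upwards [eventually_gt_atTop (0 : ℝ)] with x hx
      have h2 : a + b / x = (a * x + b) / x := by field_simp
      have h3 : (a * x + b) / x ≤ φ x / x := (div_le_div_iff_of_pos_right hx).2 (hab x hx)
      have : a + b / x ≤ φ x / x := by rw [h2]; exact h3
      exact_mod_cast this
    all_goals isBoundedDefault
  -- lower bound eventual: biconj φ x / x eventually exceeds anything below a slope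
  have hbiLow : ∀ a ∈ S, ∀ c : ℝ, c < a → ∀ᶠ x in atTop, c < biconj φ x / x := by
    rintro a ⟨b, hab⟩ c hc
    have h1 : Tendsto (fun x : ℝ => b / x) atTop (𝓝 0) :=
      tendsto_const_nhds.div_atTop tendsto_id
    have ht : Tendsto (fun x : ℝ => a + b / x) atTop (𝓝 (a + 0)) :=
      tendsto_const_nhds.add h1
    rw [add_zero] at ht
    have hev : ∀ᶠ x in atTop, c < a + b / x := ht.eventually (eventually_gt_nhds hc)
    filter_upwards [hev, eventually_gt_atTop (0 : ℝ)] with x hx hx0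
    have h2 : a + b / x = (a * x + b) / x := by field_simp
    have h3 : (a * x + b) / x ≤ biconj φ x / x :=
      (div_le_div_iff_of_pos_right hx0).2 (hbLow a b hab x hx0)
    calc c < a + b / x := hx
    _ = (a * x + b) / x := h2
    _ ≤ biconj φ x / x := h3
  by_cases hbdd : BddAbove S
  · -- bounded slopes: the limit is sSup S
    set A := sSup S with hA
    refine ⟨(A : EReal), ?_, ?_⟩
    · -- tendsto
      rw [EReal.tendsto_coe]
      rw [tendsto_order]
      constructor
      · intro c hc
        obtain ⟨a, haS, hca⟩ := exists_lt_of_lt_csSup hSne hc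
        exact hbiLow a haS c hca
      · intro c hc
        have hup : ∀ᶠ x in atTop, biconj φ x / x ≤ A + (φ 1 - A) / x := by
          filter_upwards [eventually_ge_atTop (1 : ℝ)] with x hx
          have hx0 : (0 : ℝ) < x := lt_of_lt_of_le one_pos hx
          have hle : biconj φ x ≤ A * (x - 1) + φ 1 := by
            apply csSup_le
            · obtain ⟨a, b, hab⟩ := hφ
              exact ⟨a * x + b, a, b, hab, rfl⟩
            · rintro y ⟨a, b, hab, rfl⟩
              have haA : a ≤ A := le_csSup hbdd ⟨b, hab⟩
              have hb : a * 1 + b ≤ φ 1 := hab 1 one_pos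
              nlinarith [sub_nonneg.2 hx]
          have h2 : A + (φ 1 - A) / x = (A * (x - 1) + φ 1) / x := by field_simp; ring
          rw [h2]
          exact (div_le_div_iff_of_pos_right hx0).2 hle
        have ht : Tendsto (fun x : ℝ => A + (φ 1 - A) / x) atTop (𝓝 (A + 0)) :=
          tendsto_const_nhds.add (tendsto_const_nhds.div_atTop tendsto_id)
        rw [add_zero] at ht
        filter_upwards [hup, ht.eventually (eventually_lt_nhds hc)] with x h1 h2
        exact lt_of_le_of_lt h1 h2
    · -- liminf = A
      refine le_antisymm ?_ ?_
      · -- L ≤ A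
        by_contra h
        push_neg at h
        obtain ⟨c, hc1, hc2⟩ := EReal.exists_between_coe_real h
        have hev : ∀ᶠ x in atTop, (c : EReal) < ((φ x / x : ℝ) : EReal) :=
          eventually_lt_of_lt_liminf hc2
        have hev' : ∀ᶠ x in atTop, c * x < φ x := by
          filter_upwards [hev, eventually_gt_atTop (0 : ℝ)] with x hx hx0
          have : c < φ x / x := by exact_mod_cast hx
          calc c * x < (φ x / x) * x := by
                exact mul_lt_mul_of_pos_right this hx0
          _ = φ x := by field_simp
        obtain ⟨b, hb⟩ := slope_mem φ hφ c hev'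
        have : c ≤ A := le_csSup hbdd ⟨b, hb⟩
        have : (c : EReal) ≤ (A : EReal) := EReal.coe_le_coe_iff.2 this
        exact absurd (lt_of_le_of_lt this hc1) (lt_irrefl _)
      · -- A ≤ L
        apply le_of_forall_lt
        intro z hz
        induction z using EReal.rec with
        | bot =>
          obtain ⟨a, haS⟩ := hSne
          exact lt_of_lt_of_le (EReal.bot_lt_coe a) (hslopeL a haS)
        | coe c =>
          have hc : c < A := EReal.coe_lt_coe_iff.1 hz
          obtain ⟨a, haS, hca⟩ := exists_lt_of_lt_csSup hSne hc
          exact lt_of_lt_of_le (EReal.coe_lt_coe_iff.2 hca) (hslopeL a haS)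
        | top => exact absurd hz (not_lt.2 le_top)
  · -- unbounded slopes: the limit is ⊤
    refine ⟨⊤, ?_, ?_⟩
    · rw [EReal.tendsto_nhds_top_iff_real]
      intro y
      obtain ⟨a, haS, hya⟩ := not_bddAbove_iff.1 hbdd y
      filter_upwards [hbiLow a haS y hya] with x hx
      exact_mod_cast hx
    · rw [EReal.eq_top_iff_forall_lt]
      intro y
      obtain ⟨a, haS, hya⟩ := not_bddAbove_iff.1 hbdd y
      exact lt_of_lt_of_le (EReal.coe_lt_coe_iff.2 hya) (hslopeL a haS)
end

section
/- Let φ : (0,∞) → ℝ admit an affine minorant, let â_φ = liminf_{x→∞} φ(x)/x, and suppose â_φ < +∞ and liminf_{x→∞}(φ(x) - â_φ·x) > -∞. Then the largest convex minorant φ** satisfies liminf_{x→∞}(φ**(x) - â_φ·x) > -∞ (and â_{φ**} = â_φ). -/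
open Filter Set Topology

theorem stmt_5 (φ : ℝ → ℝ) (hφ : AffBdd φ) (a : ℝ)
    (ha : Filter.liminf (fun x => ((φ x / x : ℝ) : EReal)) atTop = (a : EReal))
    (hb : ⊥ < Filter.liminf (fun x => ((φ x - a * x : ℝ) : EReal)) atTop) :
    ⊥ < Filter.liminf (fun x => ((biconj φ x - a * x : ℝ) : EReal)) atTop ∧
      Filter.liminf (fun x => ((biconj φ x / x : ℝ) : EReal)) atTop = (a : EReal) := by
  obtain ⟨a₀, b₀, h₀⟩ := hφ
  -- extract a real eventual lower bound r for φ x - a x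
  obtain ⟨y, hy1, hy2⟩ := exists_between hb
  have hytop : y ≠ ⊤ := (hy2.trans_le le_top).ne
  have hybot : y ≠ ⊥ := hy1.ne'
  set r : ℝ := y.toReal with hrdef
  have hyr : (r : EReal) = y := EReal.coe_toReal hytop hybot
  have hev : ∀ᶠ x in atTop, (r : ℝ) ≤ φ x - a * x := by
    have := Filter.eventually_lt_of_lt_liminf (hyr ▸ hy2)
    exact this.mono fun x hx => (EReal.coe_lt_coe_iff.mp hx).le
  obtain ⟨X, hX⟩ := hev.exists_forall_of_atTop
  set c : ℝ := min r (min b₀ ((a₀ - a) * X + b₀)) with hcdef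
  have hmin : ∀ x > 0, a * x + c ≤ φ x := by
    intro x hx
    rcases le_total X x with h | h
    · have := hX x h
      have : a * x + r ≤ φ x := by linarith
      calc a * x + c ≤ a * x + r := by
            have := min_le_left r (min b₀ ((a₀ - a) * X + b₀)); linarith
        _ ≤ φ x := this
    · have h1 : a * x + c ≤ a₀ * x + b₀ := by
        have hc2 : c ≤ min b₀ ((a₀ - a) * X + b₀) := min_le_right _ _
        rcases le_total (a₀ - a) 0 with hs | hs
        · have := min_le_right b₀ ((a₀ - a) * X + b₀)
          nlinarith
        · have := min_le_left b₀ ((a₀ - a) * X + b₀)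
          nlinarith
      exact h1.trans (h₀ x hx)
  -- basic bounds for biconj
  have hbdd : ∀ x : ℝ, 0 < x → BddAbove {y : ℝ | ∃ a b : ℝ,
      (∀ t > 0, a * t + b ≤ φ t) ∧ y = a * x + b} := by
    intro x hx
    exact ⟨φ x, by rintro y ⟨a', b', h', rfl⟩; exact h' x hx⟩
  have hbic_le : ∀ x : ℝ, 0 < x → biconj φ x ≤ φ x := by
    intro x hx
    refine csSup_le ⟨a₀ * x + b₀, a₀, b₀, h₀, rfl⟩ ?_
    rintro y ⟨a', b', h', rfl⟩; exact h' x hx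
  have hbic_ge : ∀ x : ℝ, 0 < x → a * x + c ≤ biconj φ x := by
    intro x hx
    exact le_csSup (hbdd x hx) ⟨a, c, hmin, rfl⟩
  constructor
  · have h1 : ((c : ℝ) : EReal) ≤
        Filter.liminf (fun x => ((biconj φ x - a * x : ℝ) : EReal)) atTop := by
      apply Filter.le_liminf_of_le (h := ?_)
      filter_upwards [eventually_gt_atTop (0 : ℝ)] with x hx
      exact EReal.coe_le_coe_iff.mpr (by linarith [hbic_ge x hx])
    exact lt_of_lt_of_le (EReal.bot_lt_coe c) h1
  · apply le_antisymm
    · calc Filter.liminf (fun x => ((biconj φ x / x : ℝ) : EReal)) atTop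
          ≤ Filter.liminf (fun x => ((φ x / x : ℝ) : EReal)) atTop := by
            apply Filter.liminf_le_liminf (h := ?_)
            filter_upwards [eventually_gt_atTop (0 : ℝ)] with x hx
            exact EReal.coe_le_coe_iff.mpr ((div_le_div_iff_of_pos_right hx).mpr (hbic_le x hx))
        _ = (a : EReal) := ha
    · have hg : Tendsto (fun x : ℝ => a + c / x) atTop (nhds a) := by
        have : Tendsto (fun x : ℝ => c / x) atTop (nhds 0) :=
          tendsto_const_nhds.div_atTop tendsto_id
        simpa using tendsto_const_nhds.add this
      have hg' : Filter.liminf (fun x : ℝ => ((a + c / x : ℝ) : EReal)) atTop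
          = (a : EReal) := (EReal.tendsto_coe.mpr hg).liminf_eq
      rw [← hg']
      apply Filter.liminf_le_liminf (h := ?_)
      filter_upwards [eventually_gt_atTop (0 : ℝ)] with x hx
      apply EReal.coe_le_coe_iff.mpr
      rw [le_div_iff₀ hx]
      have hxne : x ≠ 0 := hx.ne'
      have : (a + c / x) * x = a * x + c := by field_simp
      rw [this]
      exact hbic_ge x hx
end

section
/- Let ψ : (0,∞) → ℝ be convex with an affine minorant, and suppose â_ψ := liminf_{x→∞} ψ(x)/x < +∞. If the (monotone) limit lim_{x→∞}(ψ(x) - ψ'(x⁻)·x) > -∞, then liminf_{x→∞}(ψ(x) - â_ψ·x) > -∞, i.e. ψ ∈ Φ₃. -/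
open Filter Set Topology

/-- Left derivative of a convex function at `x ∈ (0,∞)`: the supremum of
slopes `(ψ x - ψ t)/(x - t)` over `t ∈ (0, x)`. -/
noncomputable def leftD (ψ : ℝ → ℝ) (x : ℝ) : ℝ :=
  sSup ((fun t => (ψ x - ψ t) / (x - t)) '' Set.Ioo 0 x)

/-
Write `D = leftD ψ`. Convexity gives the supporting line `ψ t ≥ ψ x + D x (t - x)` for `t < x`,
i.e. `ψ t ≥ (ψ x - D x x) + D x t`. Eventually the intercept `ψ x - D x x` is at least some
real `c`, and since `ψ x / x` eventually exceeds every `b' < a`, the chord slopes from a fixed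
`t` to large `x`, hence also `D x`, eventually exceed every `b < a`. So `ψ t ≥ c + a t` for all
`t > 0`.
-/

section LiminfCoe

variable {α : Type*} {l : Filter α} {f : α → ℝ}

lemma eventually_lt_of_coe_lt_liminf_coe {b : ℝ}
    (h : (b : EReal) < liminf (fun x => (f x : EReal)) l) : ∀ᶠ x in l, b < f x :=
  (eventually_lt_of_lt_liminf h).mono fun _ hx => EReal.coe_lt_coe_iff.mp hx

lemma exists_eventually_lt_of_bot_lt_liminf_coe
    (h : ⊥ < liminf (fun x => (f x : EReal)) l) : ∃ c : ℝ, ∀ᶠ x in l, c < f x := by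
  obtain ⟨c, -, hc⟩ := EReal.exists_between_coe_real h
  exact ⟨c, eventually_lt_of_coe_lt_liminf_coe hc⟩

lemma bot_lt_liminf_coe_of_eventually_le {c : ℝ} (h : ∀ᶠ x in l, c ≤ f x) :
    ⊥ < liminf (fun x => (f x : EReal)) l :=
  (EReal.bot_lt_coe c).trans_le <|
    le_liminf_of_le (by isBoundedDefault) (h.mono fun _ hx => EReal.coe_le_coe_iff.mpr hx)

end LiminfCoe

lemma eventually_le_slope_of_eventually_mul_le {ψ : ℝ → ℝ} (t : ℝ) {b b' : ℝ} (hbb' : b < b')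
    (h : ∀ᶠ x in atTop, b' * x ≤ ψ x) : ∀ᶠ x in atTop, b ≤ (ψ x - ψ t) / (x - t) := by
  filter_upwards [h, eventually_gt_atTop t,
    eventually_ge_atTop ((ψ t - b * t) / (b' - b))] with x hψx htx hx
  rw [div_le_iff₀ (sub_pos.mpr hbb')] at hx
  rw [le_div_iff₀ (sub_pos.mpr htx)]
  linarith

namespace ConvexOn

variable {ψ : ℝ → ℝ} (hconv : ConvexOn ℝ (Ioi 0) ψ)
include hconv

lemma bddAbove_slope_left {x : ℝ} (hx : 0 < x) :
    BddAbove ((fun t => (ψ x - ψ t) / (x - t)) '' Ioo 0 x) := by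
  refine ⟨(ψ (x + 1) - ψ x) / (x + 1 - x), ?_⟩
  rintro y ⟨t, ht, rfl⟩
  exact hconv.slope_mono_adjacent ht.1 (mem_Ioi.mpr (by linarith)) ht.2 (by linarith)

lemma slope_le_leftD {t x : ℝ} (ht : 0 < t) (htx : t < x) :
    (ψ x - ψ t) / (x - t) ≤ leftD ψ x :=
  le_csSup (hconv.bddAbove_slope_left (ht.trans htx)) ⟨t, ⟨ht, htx⟩, rfl⟩

lemma add_leftD_mul_sub_le {t x : ℝ} (ht : 0 < t) (htx : t < x) :
    ψ x + leftD ψ x * (t - x) ≤ ψ t := by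
  have h := hconv.slope_le_leftD ht htx
  rw [div_le_iff₀ (sub_pos.mpr htx)] at h
  linarith

lemma eventually_le_leftD {a b : ℝ}
    (ha : liminf (fun x => ((ψ x / x : ℝ) : EReal)) atTop = (a : EReal)) (hb : b < a) :
    ∀ᶠ x in atTop, b ≤ leftD ψ x := by
  obtain ⟨b', hbb', hb'a⟩ := exists_between hb
  have hgrowth : ∀ᶠ x in atTop, b' * x ≤ ψ x := by
    filter_upwards [eventually_lt_of_coe_lt_liminf_coe (ha ▸ EReal.coe_lt_coe hb'a),
      eventually_gt_atTop 0] with x hx hxpos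
    exact ((lt_div_iff₀ hxpos).mp hx).le
  filter_upwards [eventually_le_slope_of_eventually_mul_le 1 hbb' hgrowth,
    eventually_gt_atTop 1] with x hslope hx
  exact hslope.trans (hconv.slope_le_leftD one_pos hx)

end ConvexOn

theorem stmt_8_general (ψ : ℝ → ℝ) (hconv : ConvexOn ℝ (Set.Ioi (0:ℝ)) ψ)
    (a : ℝ)
    (ha : Filter.liminf (fun x => ((ψ x / x : ℝ) : EReal)) atTop = (a : EReal))
    (hlim : ⊥ < Filter.liminf (fun x => ((ψ x - leftD ψ x * x : ℝ) : EReal)) atTop) :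
    ⊥ < Filter.liminf (fun x => ((ψ x - a * x : ℝ) : EReal)) atTop := by
  obtain ⟨c, hc⟩ := exists_eventually_lt_of_bot_lt_liminf_coe hlim
  have hsupport : ∀ t > 0, ∀ b < a, c + b * t ≤ ψ t := by
    intro t ht b hb
    obtain ⟨x, hcx, hbx, htx⟩ :=
      (hc.and ((hconv.eventually_le_leftD ha hb).and (eventually_gt_atTop t))).exists
    calc c + b * t ≤ ψ x - leftD ψ x * x + leftD ψ x * t := by gcongr
      _ = ψ x + leftD ψ x * (t - x) := by ring
      _ ≤ ψ t := hconv.add_leftD_mul_sub_le ht htx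
  have hbound : ∀ t > 0, c ≤ ψ t - a * t := by
    intro t ht
    have : a ≤ (ψ t - c) / t := forall_lt_imp_le_iff_le_of_dense.mp fun b hb => by
      rw [le_div_iff₀ ht]
      linarith [hsupport t ht b hb]
    rw [le_div_iff₀ ht] at this
    linarith
  exact bot_lt_liminf_coe_of_eventually_le ((eventually_gt_atTop 0).mono hbound)

theorem stmt_8 (ψ : ℝ → ℝ) (hconv : ConvexOn ℝ (Set.Ioi (0:ℝ)) ψ) (hψ : AffBdd ψ)
    (a : ℝ)
    (ha : Filter.liminf (fun x => ((ψ x / x : ℝ) : EReal)) atTop = (a : EReal))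
    (hlim : ⊥ < Filter.liminf (fun x => ((ψ x - leftD ψ x * x : ℝ) : EReal)) atTop) :
    ⊥ < Filter.liminf (fun x => ((ψ x - a * x : ℝ) : EReal)) atTop :=
  stmt_8_general ψ hconv a ha hlim
end

section
/- Let ψ : (0,∞) → ℝ be convex with an affine minorant, â_ψ := liminf_{x→∞} ψ(x)/x < +∞, and liminf_{x→∞}(ψ(x) - â_ψ·x) = -∞. Then lim_{x→∞}(ψ(x) - ψ'(x⁻)·x) = -∞, where ψ'(x⁻) is the left derivative of ψ at x. -/
open Filter Set Topology

section aux
variable {ψ : ℝ → ℝ} (hconv : ConvexOn ℝ (Set.Ioi (0:ℝ)) ψ)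

lemma leftD_ne (x : ℝ) (hx : 0 < x) :
    ((fun t => (ψ x - ψ t) / (x - t)) '' Set.Ioo 0 x).Nonempty :=
  ⟨_, ⟨x/2, ⟨by positivity, by linarith⟩, rfl⟩⟩

include hconv

lemma leftD_bdd (x : ℝ) (hx : 0 < x) :
    BddAbove ((fun t => (ψ x - ψ t) / (x - t)) '' Set.Ioo 0 x) := by
  refine ⟨(ψ (x+1) - ψ x) / (x + 1 - x), ?_⟩
  rintro y ⟨t, ⟨ht0, htx⟩, rfl⟩
  have : (ψ x - ψ t) / (x - t) = (ψ t - ψ x) / (t - x) := by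
    rw [← neg_div_neg_eq]; ring_nf
  simp only []
  rw [this]
  exact hconv.secant_mono (mem_Ioi.2 hx) (mem_Ioi.2 ht0) (by simp [mem_Ioi]; linarith)
    (ne_of_lt htx) (by intro h; linarith) (by linarith)

lemma leftD_le_slope {x t : ℝ} (hx : 0 < x) (hxt : x < t) :
    leftD ψ x ≤ (ψ t - ψ x) / (t - x) := by
  apply csSup_le (leftD_ne x hx)
  rintro y ⟨s, ⟨hs0, hsx⟩, rfl⟩
  have e : (ψ x - ψ s) / (x - s) = (ψ s - ψ x) / (s - x) := by
    rw [← neg_div_neg_eq]; ring_nf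
  simp only []
  rw [e]
  exact hconv.secant_mono (mem_Ioi.2 hx) (mem_Ioi.2 hs0) (mem_Ioi.2 (by linarith))
    (ne_of_lt hsx) (by intro h; linarith) (by linarith)

lemma slope_le_leftD {x t : ℝ} (ht : 0 < t) (htx : t < x) :
    (ψ x - ψ t) / (x - t) ≤ leftD ψ x :=
  le_csSup (leftD_bdd hconv x (ht.trans htx)) ⟨t, ⟨ht, htx⟩, rfl⟩

/-- support line inequality -/
lemma leftD_support {x t : ℝ} (hx : 0 < x) (ht : 0 < t) :
    leftD ψ x * (t - x) + ψ x ≤ ψ t := by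
  rcases lt_trichotomy t x with h | rfl | h
  · have h1 := slope_le_leftD hconv ht h
    have hxt : 0 < x - t := by linarith
    rw [div_le_iff₀ hxt] at h1
    nlinarith
  · simp
  · have h1 := leftD_le_slope hconv hx h
    have hxt : 0 < t - x := by linarith
    rw [le_div_iff₀ hxt] at h1
    nlinarith

lemma leftD_mono {x y : ℝ} (hx : 0 < x) (hxy : x ≤ y) : leftD ψ x ≤ leftD ψ y := by
  rcases eq_or_lt_of_le hxy with rfl | hxy
  · exact le_refl _
  · apply csSup_le (leftD_ne x hx)
    rintro z ⟨s, ⟨hs0, hsx⟩, rfl⟩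
    simp only []
    have e : (ψ x - ψ s) / (x - s) = (ψ s - ψ x) / (s - x) := by
      rw [← neg_div_neg_eq]; ring_nf
    have h1 : (ψ x - ψ s) / (x - s) ≤ (ψ y - ψ s) / (y - s) :=
      hconv.secant_mono (mem_Ioi.2 hs0) (mem_Ioi.2 hx) (mem_Ioi.2 (hx.trans hxy))
        (by intro h; linarith) (by intro h; linarith) hxy.le
    exact h1.trans (slope_le_leftD hconv hs0 (hsx.trans hxy))

end aux

section main
variable {ψ : ℝ → ℝ} (hconv : ConvexOn ℝ (Set.Ioi (0:ℝ)) ψ)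
include hconv

lemma gfun_mono {x y : ℝ} (hx : 0 < x) (hxy : x ≤ y) :
    ψ y - leftD ψ y * y ≤ ψ x - leftD ψ x * x := by
  have h1 := leftD_support hconv (lt_of_lt_of_le hx hxy) hx
  have h2 := leftD_mono hconv hx hxy
  nlinarith

lemma leftD_le (a : ℝ)
    (ha : Filter.liminf (fun x => ((ψ x / x : ℝ) : EReal)) atTop = (a : EReal))
    {x : ℝ} (hx : 0 < x) : leftD ψ x ≤ a := by
  by_contra h
  push_neg at h
  set ε := (leftD ψ x - a) / 2 with hε
  have hε0 : 0 < ε := by simp [hε]; linarith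
  set b0 := ψ x - leftD ψ x * x with hb0
  have hev : ∀ᶠ t in atTop, ((leftD ψ x - ε : ℝ) : EReal) ≤ ((ψ t / t : ℝ) : EReal) := by
    filter_upwards [eventually_ge_atTop (max 1 (|b0| / ε))] with t ht
    have ht1 : (1:ℝ) ≤ t := le_trans (le_max_left _ _) ht
    have ht0 : (0:ℝ) < t := by linarith
    have hsup := leftD_support hconv hx ht0
    have hbt : |b0| / ε ≤ t := le_trans (le_max_right _ _) ht
    have : -(ε * t) ≤ b0 := by
      have h1 : |b0| ≤ ε * t := by
        rw [div_le_iff₀ hε0] at hbt; linarith [hbt]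
      have := neg_abs_le b0; nlinarith
    rw [EReal.coe_le_coe_iff]
    rw [le_div_iff₀ ht0]
    nlinarith
  have := Filter.le_liminf_of_le (by isBoundedDefault) hev
  rw [ha] at this
  rw [EReal.coe_le_coe_iff] at this
  simp [hε] at this
  linarith

lemma leftD_dense (a : ℝ)
    (ha : Filter.liminf (fun x => ((ψ x / x : ℝ) : EReal)) atTop = (a : EReal))
    {ε : ℝ} (hε : 0 < ε) : ∃ x : ℝ, 0 < x ∧ a - ε < leftD ψ x := by
  by_contra h
  push_neg at h
  have hev : ∀ᶠ t in atTop, ((ψ t / t : ℝ) : EReal) ≤ ((a - ε/2 : ℝ) : EReal) := by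
    filter_upwards [eventually_ge_atTop (max 2 (2 * (|ψ 1| + |a| + ε) / ε))] with t ht
    have ht2 : (2:ℝ) ≤ t := le_trans (le_max_left _ _) ht
    have ht0 : (0:ℝ) < t := by linarith
    have h1t : (1:ℝ) < t := by linarith
    have hsl := slope_le_leftD hconv (show (0:ℝ) < 1 by norm_num) h1t
    have hLt := h t ht0
    have hslope : (ψ t - ψ 1) / (t - 1) ≤ a - ε := by
      exact hsl.trans hLt
    have ht1pos : (0:ℝ) < t - 1 := by linarith
    rw [div_le_iff₀ ht1pos] at hslope
    have hbig : 2 * (|ψ 1| + |a| + ε) / ε ≤ t := le_trans (le_max_right _ _) ht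
    rw [div_le_iff₀ hε] at hbig
    have ha1 := le_abs_self (ψ 1)
    have ha2 := le_abs_self a
    have ha2' := neg_abs_le a
    rw [EReal.coe_le_coe_iff, div_le_iff₀ ht0]
    nlinarith
  have hfreq := hev.frequently
  have := Filter.liminf_le_of_frequently_le' hfreq
  rw [ha, EReal.coe_le_coe_iff] at this
  linarith

end main

theorem stmt_9 (ψ : ℝ → ℝ) (hconv : ConvexOn ℝ (Set.Ioi (0:ℝ)) ψ) (hψ : AffBdd ψ)
    (a : ℝ)
    (ha : Filter.liminf (fun x => ((ψ x / x : ℝ) : EReal)) atTop = (a : EReal))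
    (hinf : Filter.liminf (fun x => ((ψ x - a * x : ℝ) : EReal)) atTop = ⊥) :
    Tendsto (fun x => ψ x - leftD ψ x * x) atTop atBot := by
  apply tendsto_atTop_atBot.2
  intro b
  -- Step 1: there exists x₀ > 0 with ψ x₀ - leftD ψ x₀ * x₀ ≤ b
  have hstep : ∃ x₀ : ℝ, 0 < x₀ ∧ ψ x₀ - leftD ψ x₀ * x₀ ≤ b := by
    by_contra hcon
    push_neg at hcon
    -- then ψ t ≥ a t + b for all t > 0
    have hmin : ∀ t : ℝ, 0 < t → a * t + b ≤ ψ t := by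
      intro t ht
      by_contra hlt
      push_neg at hlt
      set ε := (a * t + b - ψ t) / t with hεdef
      have hε0 : 0 < ε := by apply div_pos; linarith; exact ht
      obtain ⟨x, hx0, hxL⟩ := leftD_dense hconv a ha hε0
      have hsup := leftD_support hconv hx0 ht
      have hg := (hcon x hx0).le
      have hεt : ε * t = a * t + b - ψ t := by
        rw [hεdef]; field_simp
      have hmul : (a - ε) * t < leftD ψ x * t := mul_lt_mul_of_pos_right hxL ht
      nlinarith
    -- contradiction with liminf = ⊥
    have hfreq : ∃ᶠ t in atTop, ((ψ t - a * t : ℝ) : EReal) < ((b : ℝ) : EReal) := by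
      by_contra hnf
      rw [Filter.not_frequently] at hnf
      have hev : ∀ᶠ t in atTop, ((b : ℝ) : EReal) ≤ ((ψ t - a * t : ℝ) : EReal) := by
        filter_upwards [hnf] with t ht
        exact not_lt.1 ht
      have := Filter.le_liminf_of_le (by isBoundedDefault) hev
      rw [hinf, le_bot_iff] at this
      exact EReal.coe_ne_bot b this
    obtain ⟨t, ht1, htlt⟩ := (hfreq.and_eventually (eventually_ge_atTop (1:ℝ))).exists
    rw [EReal.coe_lt_coe_iff] at ht1
    have := hmin t (by linarith)
    linarith
  obtain ⟨x₀, hx₀, hb⟩ := hstep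
  exact ⟨x₀, fun x hx => le_trans (gfun_mono hconv hx₀ hx) hb⟩
end

section
/- Let φ(x) = 1/x² + (1/x)·sin(1/x) + 2/x and ψ(x) = φ(x) - 2/x for x > 0. Then: ψ(x) ≥ 0 for all x > 0; φ(x) - ψ(x) = 2/x → +∞ as x → 0⁺; and yet liminf_{x→0⁺}(φ**(x) - ψ(x)) < +∞, where φ** is the largest convex minorant of φ. -/
open Filter Set Topology

noncomputable def phi13 (x : ℝ) : ℝ := 1 / x ^ 2 + (1 / x) * Real.sin (1 / x) + 2 / x

noncomputable def psi13 (x : ℝ) : ℝ := phi13 x - 2 / x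

/-!
Along `x = 1/u` with `sin u = -1` the function `φ` coincides with the convex function
`f x = 1/x² + 1/x`, while along `x = 1/(u + π)` it is `ψ` that coincides with `f`. Bounding `φ**`
at `1/(u + π)` by the chord of `φ` between `1/(u + 2π)` and `1/u`, which lies on the chord of `f`,
shows that `φ** - ψ` stays below `4π²` along a sequence tending to `0⁺`, although `φ - ψ = 2/x`
blows up.
-/

open Real

lemma biconj_le_convex_combination {φ : ℝ → ℝ} (hφ : AffBdd φ) {x y a b : ℝ}
    (hx : 0 < x) (hy : 0 < y) (ha : 0 ≤ a) (hb : 0 ≤ b) (hab : a + b = 1) :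
    biconj φ (a * x + b * y) ≤ a * φ x + b * φ y := by
  obtain ⟨c, d, hcd⟩ := hφ
  refine csSup_le ⟨_, c, d, hcd, rfl⟩ ?_
  rintro _ ⟨c', d', hc'd', rfl⟩
  have hdx := mul_le_mul_of_nonneg_left (hc'd' x hx) ha
  have hdy := mul_le_mul_of_nonneg_left (hc'd' y hy) hb
  calc c' * (a * x + b * y) + d' = a * (c' * x + d') + b * (c' * y + d') := by
        linear_combination (-d') * hab
    _ ≤ a * φ x + b * φ y := add_le_add hdx hdy

lemma phi13_inv (u : ℝ) : phi13 u⁻¹ = u ^ 2 + u * sin u + 2 * u := by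
  simp only [phi13, inv_pow, div_inv_eq_mul, one_mul]

lemma psi13_inv (u : ℝ) : psi13 u⁻¹ = u ^ 2 + u * sin u := by
  rw [psi13, phi13_inv, div_inv_eq_mul]
  ring

lemma psi13_nonneg {x : ℝ} (hx : 0 < x) : 0 ≤ psi13 x := by
  rw [← inv_inv x, psi13_inv]
  have hu : 0 < x⁻¹ := inv_pos.mpr hx
  have hsin : -x⁻¹ ≤ sin x⁻¹ := (abs_le.mp (abs_sin_le_abs.trans_eq (abs_of_pos hu))).1
  nlinarith

lemma affBdd_phi13 : AffBdd phi13 :=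
  ⟨0, 0, fun x hx => by
    simpa [psi13] using add_nonneg (psi13_nonneg hx) (div_nonneg zero_le_two hx.le)⟩

lemma biconj_phi13_sub_psi13_le {u : ℝ} (hu : 0 < u) (hsin : sin u = -1) :
    biconj phi13 (u + π)⁻¹ - psi13 (u + π)⁻¹ ≤ 3 * π ^ 2 + π ^ 2 / (u + π) := by
  set w := u + π
  set v := u + 2 * π
  have hw : 0 < w := by positivity
  have hv : 0 < v := by positivity
  set l := v / (2 * w)
  have hl : 0 ≤ l := by positivity
  have hl' : 0 ≤ 1 - l := by
    rw [sub_nonneg, div_le_one (by positivity)]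
    linarith [pi_pos]
  have hpoint : w⁻¹ = l * v⁻¹ + (1 - l) * u⁻¹ := by
    simp only [l, v, w]
    field_simp
    ring
  have hchord : biconj phi13 w⁻¹ ≤ l * (v ^ 2 + v) + (1 - l) * (u ^ 2 + u) := by
    have := biconj_le_convex_combination affBdd_phi13 (inv_pos.mpr hv) (inv_pos.mpr hu) hl hl'
      (add_sub_cancel l 1)
    rw [← hpoint, phi13_inv, phi13_inv, sin_add_two_pi, hsin] at this
    linarith
  have hpsi : psi13 w⁻¹ = w ^ 2 + w := by
    rw [psi13_inv, sin_add_pi, hsin, neg_neg, mul_one]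
  calc biconj phi13 w⁻¹ - psi13 w⁻¹
      ≤ l * (v ^ 2 + v) + (1 - l) * (u ^ 2 + u) - (w ^ 2 + w) := by
        rw [hpsi]; exact sub_le_sub_right hchord _
    _ = 3 * π ^ 2 + π ^ 2 / w := by
        simp only [l, v, w]
        field_simp
        ring

lemma tendsto_inv_three_pi_div_two_add_nat_mul_two_pi_add_pi :
    Tendsto (fun k : ℕ => (3 * π / 2 + k * (2 * π) + π)⁻¹) atTop (𝓝[>] 0) := by
  refine tendsto_inv_atTop_nhdsGT_zero.comp (tendsto_atTop_add_const_right _ _ ?_)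
  exact tendsto_atTop_add_const_left _ _
    (tendsto_natCast_atTop_atTop.atTop_mul_const two_pi_pos)

lemma biconj_phi13_sub_psi13_le_four_pi_sq (k : ℕ) :
    biconj phi13 (3 * π / 2 + k * (2 * π) + π)⁻¹ - psi13 (3 * π / 2 + k * (2 * π) + π)⁻¹
      ≤ 4 * π ^ 2 := by
  have hu : 0 < 3 * π / 2 + k * (2 * π) := by positivity
  have hsin : sin (3 * π / 2 + k * (2 * π)) = -1 :=
    sin_eq_neg_one_iff.mpr ⟨k + 1, by push_cast; ring⟩
  have hπ : π ^ 2 / (3 * π / 2 + k * (2 * π) + π) ≤ π ^ 2 :=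
    div_le_self (sq_nonneg π) (by linarith [pi_gt_three])
  linarith [biconj_phi13_sub_psi13_le hu hsin]

theorem stmt_13 :
    (∀ x > 0, 0 ≤ psi13 x) ∧
    Tendsto (fun x => phi13 x - psi13 x) (𝓝[>] (0:ℝ)) atTop ∧
    Filter.liminf (fun x => ((biconj phi13 x - psi13 x : ℝ) : EReal)) (𝓝[>] (0:ℝ)) < ⊤ := by
  refine ⟨fun x hx => psi13_nonneg hx, ?_, ?_⟩
  · simp only [psi13, sub_sub_cancel, div_eq_mul_inv]
    exact tendsto_inv_nhdsGT_zero.const_mul_atTop two_pos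
  · have hfreq :
        ∃ᶠ x in 𝓝[>] (0:ℝ), ((biconj phi13 x - psi13 x : ℝ) : EReal) ≤ (4 * π ^ 2 : ℝ) :=
      tendsto_inv_three_pi_div_two_add_nat_mul_two_pi_add_pi.frequently
        (Frequently.of_forall fun k => EReal.coe_le_coe (biconj_phi13_sub_psi13_le_four_pi_sq k))
    exact (liminf_le_of_frequently_le hfreq).trans_lt (EReal.coe_lt_top _)
end

section
/- If φ, ψ : (0,∞) → ℝ both admit affine minorants and (φ(x) - ψ(x)) → +∞ as x → 0⁺, then (φ**(x) - ψ**(x)) → +∞ as x → 0⁺, where φ**, ψ** denote the largest convex minorants of φ and ψ respectively. -/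
open Filter Set Topology

lemma bddAbove_biconjSet (φ : ℝ → ℝ) {x : ℝ} (hx : 0 < x) :
    BddAbove {y : ℝ | ∃ a b : ℝ, (∀ t > 0, a * t + b ≤ φ t) ∧ y = a * x + b} := by
  refine ⟨φ x, ?_⟩
  rintro y ⟨a, b, h, rfl⟩
  exact h x hx

lemma le_biconj (φ : ℝ → ℝ) {x a b : ℝ} (hx : 0 < x) (h : ∀ t > 0, a * t + b ≤ φ t) :
    a * x + b ≤ biconj φ x :=
  le_csSup (bddAbove_biconjSet φ hx) ⟨a, b, h, rfl⟩

theorem stmt_16 (φ ψ : ℝ → ℝ) (hφ : AffBdd φ) (hψ : AffBdd ψ)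
    (hlim : Tendsto (fun x => φ x - ψ x) (𝓝[>] (0:ℝ)) atTop) :
    Tendsto (fun x => biconj φ x - biconj ψ x) (𝓝[>] (0:ℝ)) atTop := by
  obtain ⟨aφ, bφ, hφ'⟩ := hφ
  obtain ⟨aψ, bψ, hψ'⟩ := hψ
  rw [tendsto_atTop]
  intro M
  have h1 : ∀ᶠ t in 𝓝[>] (0:ℝ), M + 2 ≤ φ t - ψ t :=
    hlim.eventually (eventually_ge_atTop (M + 2))
  rw [eventually_iff, mem_nhdsGT_iff_exists_Ioo_subset] at h1
  obtain ⟨δ, hδpos, hδ⟩ := h1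
  rw [mem_Ioi] at hδpos
  set d := δ / 2 with hd
  have hdpos : 0 < d := by positivity
  have hkey : ∀ t, 0 < t → t ≤ d → ψ t + (M + 2) ≤ φ t := by
    intro t ht htd
    have : t ∈ Ioo (0:ℝ) δ := ⟨ht, by simp only [hd] at htd; linarith⟩
    have := hδ this
    simp only [mem_setOf_eq] at this
    linarith
  -- constants
  set Qlow : ℝ := bψ - |aψ| * d with hQlow_def
  set N : ℝ := ψ d - Qlow + 1 with hN_def
  set Ca : ℝ := max 0 (2 * N / d) with hCa_def
  set Λ : ℝ := max (max 0 (Ca - aφ)) ((ψ d + (M + 2) - aφ * d - bφ) / d) with hΛ_def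
  have hΛ0 : 0 ≤ Λ := le_trans (le_max_left 0 _) (le_max_left _ _)
  have hΛ1 : Ca - aφ ≤ Λ := le_trans (le_max_right 0 _) (le_max_left _ _)
  have hΛ2 : ψ d + (M + 2) - aφ * d - bφ ≤ Λ * d := by
    have := le_max_right (max 0 (Ca - aφ)) ((ψ d + (M + 2) - aφ * d - bφ) / d)
    rw [div_le_iff₀ hdpos] at this
    linarith
  set ε : ℝ := min (d / 2) (1 / (Λ + 1)) with hε_def
  have hεpos : 0 < ε := lt_min (by positivity) (by positivity)
  filter_upwards [Ioo_mem_nhdsGT_of_mem (show (0:ℝ) ∈ Ico 0 ε from ⟨le_refl 0, hεpos⟩)]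
    with x hx
  obtain ⟨hx1, hx2⟩ := hx
  have hxd2 : x ≤ d / 2 := le_trans hx2.le (min_le_left _ _)
  have hxd : x ≤ d := by linarith
  have hxΛ : x * (Λ + 1) < 1 := by
    have : x < 1 / (Λ + 1) := lt_of_lt_of_le hx2 (min_le_right _ _)
    rwa [lt_div_iff₀ (by linarith)] at this
  have hΛx : Λ * x ≤ 1 := by nlinarith
  -- lower bound for biconj ψ x
  have hQlow : Qlow ≤ biconj ψ x := by
    have h := le_biconj ψ hx1 hψ'
    have h2 : -|aψ| * x ≤ aψ * x := mul_le_mul_of_nonneg_right (neg_abs_le aψ) hx1.le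
    have h3 : |aψ| * x ≤ |aψ| * d := mul_le_mul_of_nonneg_left hxd (abs_nonneg aψ)
    simp only [hQlow_def]
    linarith
  -- pick a near-optimal affine minorant of ψ at x
  have hne : {y : ℝ | ∃ a b : ℝ, (∀ t > 0, a * t + b ≤ ψ t) ∧ y = a * x + b}.Nonempty :=
    ⟨aψ * x + bψ, aψ, bψ, hψ', rfl⟩
  have hlt : biconj ψ x - 1 < biconj ψ x := by linarith
  obtain ⟨y, ⟨a, b, hab, rfl⟩, hy⟩ := exists_lt_of_lt_csSup hne hlt
  -- bound on a
  have haδb : a * d + b ≤ ψ d := hab d hdpos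
  have haxb : Qlow - 1 < a * x + b := by linarith
  have ha : a ≤ Ca := by
    by_cases ha0 : a ≤ 0
    · exact le_trans ha0 (le_max_left 0 _)
    · push_neg at ha0
      have h4 : a * (d / 2) ≤ a * (d - x) :=
        mul_le_mul_of_nonneg_left (by linarith) ha0.le
      have h5 : a * d ≤ 2 * N := by simp only [hN_def]; nlinarith
      have h6 : a ≤ 2 * N / d := (le_div_iff₀ hdpos).mpr (by linarith)
      exact le_trans h6 (le_max_right 0 _)
  -- the tilted line is an affine minorant of φ
  have hmin : ∀ t > 0, (a - Λ) * t + (b + (M + 2)) ≤ φ t := by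
    intro t ht
    by_cases htd : t ≤ d
    · have h7 := hkey t ht htd
      have h8 := hab t ht
      have h9 : 0 ≤ Λ * t := mul_nonneg hΛ0 ht.le
      nlinarith
    · push_neg at htd
      have hφt := hφ' t ht
      have hslope : a - Λ ≤ aφ := by linarith
      have h10 : (a - Λ) * (t - d) ≤ aφ * (t - d) :=
        mul_le_mul_of_nonneg_right hslope (by linarith)
      nlinarith
  have hP : (a - Λ) * x + (b + (M + 2)) ≤ biconj φ x := le_biconj φ hx1 hmin
  nlinarith
end
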